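/- Fix c₁ ∈ (0,1]. There is a constant C > 0, depending only on c₁, with the following property. Let t ≥ 1, let N₀, N₁, M, P, r > 0 be reals, let q ∈ [P, 2P], m ∈ [M, 2M], and ξ ∈ [2/3, 3]. Let Ṽ : ℝ → ℝ be smooth, supported in (1,2), with ∫_ℝ |Ṽ'(y)| dy ≤ 1. Let φ be a smooth real-valued function on an open interval containing [1,2] such that the function u ↦ φ(u³) has second derivative ≥ c₁ at every u ∈ [1, 2^{1/3}]. Then |∫₀^∞ Ṽ(y) e(tφ(y) + (2/q)(N₀m)^{1/2} y^{1/2} + (3/q)(N₀N₁ξ/r)^{1/3} y^{1/3}) dy| ≤ C · max{t, √(N₀M)/P}^{−1/2}. -/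

import Mathlib

open MeasureTheory Set
open intervalIntegral

/-- `e(x) = exp(2πix)`. -/
noncomputable def e2pi (x : ℝ) : ℂ := Complex.exp (2 * Real.pi * Complex.I * x)

lemma norm_e2pi (x : ℝ) : ‖e2pi x‖ = 1 := by
  unfold e2pi
  rw [Complex.norm_exp]
  have : (2 * ↑Real.pi * Complex.I * ↑x).re = 0 := by simp [Complex.mul_re]
  rw [this, Real.exp_zero]

lemma continuous_e2pi : Continuous e2pi := by
  unfold e2pi; fun_prop

lemma norm_T_mul (x : ℝ) : ‖(2 * ↑Real.pi * Complex.I : ℂ) * x‖ = 2 * Real.pi * |x| := by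
  have h : (2 * ↑Real.pi * Complex.I : ℂ) * x
      = ((2 * Real.pi : ℝ) : ℂ) * Complex.I * (x : ℂ) := by push_cast; ring
  simp only [h, norm_mul, Complex.norm_real, Complex.norm_I, Real.norm_eq_abs]
  rw [abs_of_pos (by norm_num : (0:ℝ) < 2), abs_of_pos Real.pi_pos]
  ring

lemma T_ne_zero : (2 * ↑Real.pi * Complex.I : ℂ) ≠ 0 := by
  simp [Complex.ext_iff, Real.pi_ne_zero]

lemma vdc_first {g g1 g2 : ℝ → ℝ} {c d μ : ℝ} (hcd : c ≤ d) (hμ : 0 < μ)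
    (hg : ∀ u ∈ Icc c d, HasDerivAt g (g1 u) u)
    (hg1 : ∀ u ∈ Icc c d, HasDerivAt g1 (g2 u) u)
    (hg2c : ContinuousOn g2 (Icc c d))
    (hg2pos : ∀ u ∈ Icc c d, 0 ≤ g2 u)
    (hlow : ∀ u ∈ Icc c d, μ ≤ |g1 u|) :
    ‖∫ u in c..d, e2pi (g u)‖ ≤ 1 / μ := by
  set T : ℂ := 2 * ↑Real.pi * Complex.I with hTdef
  have huIcc : uIcc c d = Icc c d := uIcc_of_le hcd
  have hg1c : ContinuousOn g1 (Icc c d) := fun u hu => (hg1 u hu).continuousAt.continuousWithinAt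
  have hgc : ContinuousOn g (Icc c d) := fun u hu => (hg u hu).continuousAt.continuousWithinAt
  have hg1ne : ∀ u ∈ Icc c d, g1 u ≠ 0 := by
    intro u hu h0
    have := hlow u hu
    rw [h0, abs_zero] at this; linarith
  have hTg1ne : ∀ u ∈ Icc c d, T * ↑(g1 u) ≠ 0 := fun u hu =>
    mul_ne_zero T_ne_zero (Complex.ofReal_ne_zero.mpr (hg1ne u hu))
  set U : ℝ → ℂ := fun x => e2pi (g x) with hUdef
  set U' : ℝ → ℂ := fun x => e2pi (g x) * (T * ↑(g1 x)) with hU'def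
  set V : ℝ → ℂ := fun x => 1 / (T * ↑(g1 x)) with hVdef
  set V' : ℝ → ℂ := fun x => -(T * ↑(g2 x)) / (T * ↑(g1 x)) ^ 2 with hV'def
  have hU : ∀ x ∈ Icc c d, HasDerivAt U (U' x) x := fun x hx =>
    ((hg x hx).ofReal_comp.const_mul T).cexp
  have hV : ∀ x ∈ Icc c d, HasDerivAt V (V' x) x := by
    intro x hx
    have h := (hasDerivAt_const x (1:ℂ)).div
      ((hg1 x hx).ofReal_comp.const_mul T) (hTg1ne x hx)
    exact h.congr_deriv (by simp only [hV'def]; ring)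
  -- continuity
  have hUc : ContinuousOn U (Icc c d) :=
    continuous_e2pi.comp_continuousOn hgc
  have hVc : ContinuousOn V (Icc c d) :=
    continuousOn_const.div
      (continuousOn_const.mul (Complex.continuous_ofReal.comp_continuousOn hg1c)) hTg1ne
  have hU'c : ContinuousOn U' (Icc c d) :=
    hUc.mul (continuousOn_const.mul (Complex.continuous_ofReal.comp_continuousOn hg1c))
  have hV'c : ContinuousOn V' (Icc c d) := by
    apply ContinuousOn.div
    · exact (continuousOn_const.mul (Complex.continuous_ofReal.comp_continuousOn hg2c)).neg
    · exact (continuousOn_const.mul (Complex.continuous_ofReal.comp_continuousOn hg1c)).pow 2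
    · exact fun x hx => pow_ne_zero 2 (hTg1ne x hx)
  have hIBP : ∫ x in c..d, (U' x * V x + U x * V' x) = U d * V d - U c * V c := by
    apply integral_deriv_mul_eq_sub_of_hasDerivAt
    · rw [huIcc]; exact hUc
    · rw [huIcc]; exact hVc
    · rw [min_eq_left hcd, max_eq_right hcd]
      exact fun x hx => hU x (Ioo_subset_Icc_self hx)
    · rw [min_eq_left hcd, max_eq_right hcd]
      exact fun x hx => hV x (Ioo_subset_Icc_self hx)
    · exact (hU'c.mono huIcc.subset).intervalIntegrable
    · exact (hV'c.mono huIcc.subset).intervalIntegrable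
  have hint1 : IntervalIntegrable (fun x => U' x * V x) volume c d :=
    ((hU'c.mul hVc).mono huIcc.subset).intervalIntegrable
  have hint2 : IntervalIntegrable (fun x => U x * V' x) volume c d :=
    ((hUc.mul hV'c).mono huIcc.subset).intervalIntegrable
  have hsplit : ∫ x in c..d, (U' x * V x + U x * V' x)
      = (∫ x in c..d, U' x * V x) + ∫ x in c..d, U x * V' x :=
    integral_add hint1 hint2
  have hUV : EqOn (fun x => e2pi (g x)) (fun x => U' x * V x) (uIcc c d) := by
    intro x hx
    rw [huIcc] at hx
    simp only [hU'def, hVdef]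
    rw [mul_one_div, mul_div_cancel_right₀ _ (hTg1ne x hx)]
  have hmain : (∫ u in c..d, e2pi (g u))
      = (U d * V d - U c * V c) - ∫ x in c..d, U x * V' x := by
    rw [intervalIntegral.integral_congr hUV]
    rw [← hIBP, hsplit]; ring
  -- norms
  have hnormV : ∀ x ∈ Icc c d, ‖V x‖ ≤ (2 * Real.pi * μ)⁻¹ := by
    intro x hx
    simp only [hVdef, norm_div, norm_one]
    rw [norm_T_mul, one_div]
    apply inv_anti₀
    · positivity
    · have := hlow x hx
      nlinarith [Real.pi_pos]
  -- FTC for the variation integral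
  have hkey : ∫ x in c..d, g2 x / (g1 x) ^ 2 = (g1 c)⁻¹ - (g1 d)⁻¹ := by
    have hF : ∀ x ∈ uIcc c d, HasDerivAt (fun y => -(g1 y)⁻¹) (g2 x / (g1 x) ^ 2) x := by
      intro x hx
      rw [huIcc] at hx
      have := ((hg1 x hx).inv (hg1ne x hx)).neg
      exact this.congr_deriv (by ring)
    have hint : IntervalIntegrable (fun x => g2 x / (g1 x) ^ 2) volume c d := by
      apply ContinuousOn.intervalIntegrable
      rw [huIcc]
      exact hg2c.div (hg1c.pow 2) (fun x hx => pow_ne_zero 2 (hg1ne x hx))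
    have := integral_eq_sub_of_hasDerivAt hF hint
    rw [this]; ring
  have hinvbound : ∀ x ∈ Icc c d, |(g1 x)⁻¹| ≤ μ⁻¹ := by
    intro x hx
    rw [abs_inv]
    exact inv_anti₀ hμ (hlow x hx)
  have hvar : (∫ x in c..d, g2 x / (g1 x) ^ 2) ≤ 2 / μ := by
    rw [hkey]
    have h1 := hinvbound c ⟨le_refl c, hcd⟩
    have h2 := hinvbound d ⟨hcd, le_refl d⟩
    have := abs_sub ((g1 c)⁻¹) ((g1 d)⁻¹)
    calc (g1 c)⁻¹ - (g1 d)⁻¹ ≤ |(g1 c)⁻¹ - (g1 d)⁻¹| := le_abs_self _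
      _ ≤ |(g1 c)⁻¹| + |(g1 d)⁻¹| := abs_sub _ _
      _ ≤ μ⁻¹ + μ⁻¹ := add_le_add h1 h2
      _ = 2 / μ := by ring
  have hnormUV' : ∀ x ∈ Icc c d, ‖U x * V' x‖ = (2 * Real.pi)⁻¹ * (g2 x / (g1 x) ^ 2) := by
    intro x hx
    rw [norm_mul]
    have h1 : ‖U x‖ = 1 := norm_e2pi _
    rw [h1, one_mul, hV'def]
    simp only [norm_div, norm_neg, norm_pow]
    rw [norm_T_mul, norm_T_mul, abs_of_nonneg (hg2pos x hx), mul_pow, sq_abs]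
    have hpi : (0:ℝ) < Real.pi := Real.pi_pos
    have h1 := hg1ne x hx
    field_simp
  have hintnorm : ‖∫ x in c..d, U x * V' x‖ ≤ (2 * Real.pi)⁻¹ * (2 / μ) := by
    calc ‖∫ x in c..d, U x * V' x‖ ≤ ∫ x in c..d, ‖U x * V' x‖ :=
          intervalIntegral.norm_integral_le_integral_norm hcd
      _ = ∫ x in c..d, (2 * Real.pi)⁻¹ * (g2 x / (g1 x) ^ 2) := by
          apply intervalIntegral.integral_congr
          intro x hx; rw [huIcc] at hx; exact hnormUV' x hx
      _ = (2 * Real.pi)⁻¹ * ∫ x in c..d, g2 x / (g1 x) ^ 2 :=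
          intervalIntegral.integral_const_mul _ _
      _ ≤ (2 * Real.pi)⁻¹ * (2 / μ) := by
          apply mul_le_mul_of_nonneg_left hvar
          positivity
  have hend : ∀ x ∈ Icc c d, ‖U x * V x‖ ≤ (2 * Real.pi * μ)⁻¹ := by
    intro x hx
    rw [norm_mul, norm_e2pi, one_mul]
    exact hnormV x hx
  have hpi2 : (2:ℝ) ≤ Real.pi := by linarith [Real.pi_gt_three]
  have hfinal : ‖∫ u in c..d, e2pi (g u)‖ ≤
      (2 * Real.pi * μ)⁻¹ + (2 * Real.pi * μ)⁻¹ + (2 * Real.pi)⁻¹ * (2 / μ) := by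
    rw [hmain]
    calc ‖U d * V d - U c * V c - ∫ x in c..d, U x * V' x‖
        ≤ ‖U d * V d - U c * V c‖ + ‖∫ x in c..d, U x * V' x‖ := norm_sub_le _ _
      _ ≤ (‖U d * V d‖ + ‖U c * V c‖) + (2 * Real.pi)⁻¹ * (2 / μ) :=
          add_le_add (norm_sub_le _ _) hintnorm
      _ ≤ ((2 * Real.pi * μ)⁻¹ + (2 * Real.pi * μ)⁻¹) + (2 * Real.pi)⁻¹ * (2 / μ) := by
          apply add_le_add_left
          exact add_le_add (hend d ⟨hcd, le_refl d⟩) (hend c ⟨le_refl c, hcd⟩)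
      _ = (2 * Real.pi * μ)⁻¹ + (2 * Real.pi * μ)⁻¹ + (2 * Real.pi)⁻¹ * (2 / μ) := by ring
  refine hfinal.trans ?_
  have hpi : (0:ℝ) < Real.pi := Real.pi_pos
  have heq : (2 * Real.pi * μ)⁻¹ + (2 * Real.pi * μ)⁻¹ + (2 * Real.pi)⁻¹ * (2 / μ)
      = 2 / (Real.pi * μ) := by
    field_simp
    ring
  rw [heq, div_le_div_iff₀ (by positivity) hμ]
  nlinarith

lemma vdc_second {g g1 g2 : ℝ → ℝ} {a b lam : ℝ} (hab : a ≤ b) (hlam : 0 < lam)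
    (hg : ∀ u ∈ Icc a b, HasDerivAt g (g1 u) u)
    (hg1 : ∀ u ∈ Icc a b, HasDerivAt g1 (g2 u) u)
    (hg2c : ContinuousOn g2 (Icc a b))
    (hg2low : ∀ u ∈ Icc a b, lam ≤ g2 u) :
    ‖∫ u in a..b, e2pi (g u)‖ ≤ 4 / Real.sqrt lam := by
  set δ := Real.sqrt lam with hδdef
  have hδ : 0 < δ := Real.sqrt_pos.mpr hlam
  have hδsq : δ * δ = lam := Real.mul_self_sqrt hlam.le
  have hg2pos : ∀ u ∈ Icc a b, 0 ≤ g2 u := fun u hu => hlam.le.trans (hg2low u hu)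
  have hg1c : ContinuousOn g1 (Icc a b) := fun u hu => (hg1 u hu).continuousAt.continuousWithinAt
  have hgc : ContinuousOn g (Icc a b) := fun u hu => (hg u hu).continuousAt.continuousWithinAt
  have hEc : ContinuousOn (fun u => e2pi (g u)) (Icc a b) :=
    continuous_e2pi.comp_continuousOn hgc
  -- monotonicity fact
  have hmono : ∀ u ∈ Icc a b, ∀ v ∈ Icc a b, u ≤ v → lam * (v - u) ≤ g1 v - g1 u := by
    have hmon : MonotoneOn (fun x => g1 x - lam * x) (Icc a b) := by
      apply monotoneOn_of_deriv_nonneg (convex_Icc a b)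
      · exact hg1c.sub (continuousOn_const.mul continuousOn_id)
      · intro x hx
        rw [interior_Icc] at hx
        exact (((hg1 x (Ioo_subset_Icc_self hx)).sub
          ((hasDerivAt_id x).const_mul lam)).differentiableAt).differentiableWithinAt
      · intro x hx
        rw [interior_Icc] at hx
        have hd := (hg1 x (Ioo_subset_Icc_self hx)).sub ((hasDerivAt_id x).const_mul lam)
        rw [HasDerivAt.deriv (show HasDerivAt (fun x => g1 x - lam * x) (g2 x - lam) x from hd.congr_deriv (by simp))]
        have := hg2low x (Ioo_subset_Icc_self hx)
        linarith
    intro u hu v hv huv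
    have := hmon hu hv huv
    simp only at this
    nlinarith
  -- restriction helper
  have hrestr : ∀ c d : ℝ, a ≤ c → d ≤ b → c ≤ d →
      (∀ u ∈ Icc c d, δ ≤ |g1 u|) → ‖∫ u in c..d, e2pi (g u)‖ ≤ 1 / δ := by
    intro c d hac hdb hcd hlow
    have hsub : Icc c d ⊆ Icc a b := Icc_subset_Icc hac hdb
    exact vdc_first hcd hδ (fun u hu => hg u (hsub hu)) (fun u hu => hg1 u (hsub hu))
      (hg2c.mono hsub) (fun u hu => hg2pos u (hsub hu)) hlow
  by_cases hcase1 : g1 b ≤ -δ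
  · have h := hrestr a b le_rfl le_rfl hab (fun u hu => by
      have := hmono u hu b (right_mem_Icc.mpr hab) hu.2
      have hnn : 0 ≤ lam * (b - u) := mul_nonneg hlam.le (by linarith [hu.2])
      have : g1 u ≤ -δ := by linarith
      rw [abs_of_nonpos (by linarith)]
      linarith)
    refine h.trans ?_
    rw [div_le_div_iff₀ hδ (by positivity)]
    nlinarith
  by_cases hcase2 : δ ≤ g1 a
  · have h := hrestr a b le_rfl le_rfl hab (fun u hu => by
      have := hmono a (left_mem_Icc.mpr hab) u hu hu.1
      have hnn : 0 ≤ lam * (u - a) := mul_nonneg hlam.le (by linarith [hu.1])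
      rw [abs_of_nonneg (by linarith)]
      linarith)
    refine h.trans ?_
    rw [div_le_div_iff₀ hδ (by positivity)]
    nlinarith
  push_neg at hcase1 hcase2
  -- left point p
  obtain ⟨p, hpmem, hplow, hpalt, hpint⟩ :
      ∃ p ∈ Icc a b, -δ ≤ g1 p ∧ (p = a ∨ g1 p = -δ) ∧
        ‖∫ u in a..p, e2pi (g u)‖ ≤ 1 / δ := by
    by_cases hga : g1 a ≤ -δ
    · obtain ⟨p, hpmem, hp⟩ := intermediate_value_Icc hab hg1c ⟨hga, hcase1.le⟩
      refine ⟨p, hpmem, hp.ge, Or.inr hp, ?_⟩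
      apply hrestr a p le_rfl hpmem.2 hpmem.1
      intro u hu
      have hmem : u ∈ Icc a b := ⟨hu.1, hu.2.trans hpmem.2⟩
      have := hmono u hmem p hpmem hu.2
      have hnn : 0 ≤ lam * (p - u) := mul_nonneg hlam.le (by linarith [hu.2])
      rw [abs_of_nonpos (by linarith)]
      linarith
    · push_neg at hga
      refine ⟨a, left_mem_Icc.mpr hab, hga.le, Or.inl rfl, ?_⟩
      rw [intervalIntegral.integral_same, norm_zero]
      positivity
  -- right point q
  obtain ⟨q, hqmem, hqhigh, hqalt, hqint⟩ :
      ∃ q ∈ Icc a b, g1 q ≤ δ ∧ (q = b ∨ g1 q = δ) ∧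
        ‖∫ u in q..b, e2pi (g u)‖ ≤ 1 / δ := by
    by_cases hgb : δ ≤ g1 b
    · obtain ⟨q, hqmem, hq⟩ := intermediate_value_Icc hab hg1c ⟨hcase2.le, hgb⟩
      refine ⟨q, hqmem, hq.le, Or.inr hq, ?_⟩
      apply hrestr q b hqmem.1 le_rfl hqmem.2
      intro u hu
      have hmem : u ∈ Icc a b := ⟨hqmem.1.trans hu.1, hu.2⟩
      have := hmono q hqmem u hmem hu.1
      have hnn : 0 ≤ lam * (u - q) := mul_nonneg hlam.le (by linarith [hu.1])
      rw [abs_of_nonneg (by linarith)]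
      linarith
    · push_neg at hgb
      refine ⟨b, right_mem_Icc.mpr hab, hgb.le, Or.inl rfl, ?_⟩
      rw [intervalIntegral.integral_same, norm_zero]
      positivity
  -- p ≤ q
  have hpq : p ≤ q := by
    rcases hpalt with rfl | hp
    · exact hqmem.1
    rcases hqalt with rfl | hq
    · exact hpmem.2
    by_contra hlt
    push_neg at hlt
    have := hmono q hqmem p hpmem hlt.le
    rw [hp, hq] at this
    nlinarith
  -- middle bound
  have hmid : ‖∫ u in p..q, e2pi (g u)‖ ≤ 2 / δ := by
    have hlen : q - p ≤ 2 / δ := by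
      have h1 := hmono p hpmem q hqmem hpq
      have h2 : (δ * δ) * (q - p) ≤ 2 * δ := by rw [hδsq]; linarith
      rw [le_div_iff₀ hδ]
      nlinarith
    calc ‖∫ u in p..q, e2pi (g u)‖ ≤ 1 * |q - p| := by
          apply intervalIntegral.norm_integral_le_of_norm_le_const
          intro x _; rw [norm_e2pi]
      _ = q - p := by rw [one_mul, abs_of_nonneg (by linarith)]
      _ ≤ 2 / δ := hlen
  -- glue
  have hi1 : IntervalIntegrable (fun u => e2pi (g u)) volume a p :=
    (hEc.mono (by rw [uIcc_of_le hpmem.1]; exact Icc_subset_Icc le_rfl hpmem.2)).intervalIntegrable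
  have hi2 : IntervalIntegrable (fun u => e2pi (g u)) volume p q :=
    (hEc.mono (by rw [uIcc_of_le hpq]; exact Icc_subset_Icc hpmem.1 hqmem.2)).intervalIntegrable
  have hi3 : IntervalIntegrable (fun u => e2pi (g u)) volume q b :=
    (hEc.mono (by rw [uIcc_of_le hqmem.2]; exact Icc_subset_Icc hqmem.1 le_rfl)).intervalIntegrable
  have hglue : (∫ u in a..b, e2pi (g u))
      = (∫ u in a..p, e2pi (g u)) + (∫ u in p..q, e2pi (g u)) + ∫ u in q..b, e2pi (g u) := by
    rw [intervalIntegral.integral_add_adjacent_intervals hi1 hi2,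
      intervalIntegral.integral_add_adjacent_intervals (hi1.trans hi2) hi3]
  rw [hglue]
  calc ‖(∫ u in a..p, e2pi (g u)) + (∫ u in p..q, e2pi (g u)) + ∫ u in q..b, e2pi (g u)‖
      ≤ ‖(∫ u in a..p, e2pi (g u)) + (∫ u in p..q, e2pi (g u))‖ + ‖∫ u in q..b, e2pi (g u)‖ :=
        norm_add_le _ _
    _ ≤ (‖∫ u in a..p, e2pi (g u)‖ + ‖∫ u in p..q, e2pi (g u)‖) + ‖∫ u in q..b, e2pi (g u)‖ :=
        add_le_add_left (norm_add_le _ _) _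
    _ ≤ (1 / δ + 2 / δ) + 1 / δ := by
        apply add_le_add (add_le_add hpint hmid) hqint
    _ = 4 / δ := by ring

set_option maxHeartbeats 1000000 in
/-- The second-derivative bound (5.16) of the paper for the oscillatory integral
`𝔍ᵣ⁺(N₁ξ, m, q)` arising after combining the GL(3) and GL(2) Voronoi summations. -/
theorem J_plus_second_derivative_bound (c₁ : ℝ) (hc₁ : c₁ ∈ Set.Ioc (0 : ℝ) 1) :
    ∃ C : ℝ, 0 < C ∧
      ∀ (t N₀ N₁ M P r q m ξ : ℝ) (Vt φ : ℝ → ℝ),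
        1 ≤ t → 0 < N₀ → 0 < N₁ → 0 < M → 0 < P → 0 < r →
        q ∈ Icc P (2 * P) → m ∈ Icc M (2 * M) → ξ ∈ Icc (2 / 3 : ℝ) 3 →
        ContDiff ℝ (⊤ : ℕ∞) Vt → Function.support Vt ⊆ Ioo 1 2 →
        (∫ y : ℝ, |deriv Vt y|) ≤ 1 →
        (∃ a' b' : ℝ, a' < 1 ∧ 2 < b' ∧ ContDiffOn ℝ (⊤ : ℕ∞) φ (Ioo a' b')) →
        (∀ u ∈ Icc (1 : ℝ) (2 ^ ((1 : ℝ) / 3)),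
          c₁ ≤ iteratedDeriv 2 (fun v => φ (v ^ 3)) u) →
        ‖∫ y in Ioi (0 : ℝ),
            (Vt y : ℂ) *
              e2pi (t * φ y + (2 / q) * Real.sqrt (N₀ * m) * Real.sqrt y +
                (3 / q) * (N₀ * N₁ * ξ / r) ^ ((1 : ℝ) / 3) * y ^ ((1 : ℝ) / 3))‖ ≤
          C * (max t (Real.sqrt (N₀ * M) / P)) ^ (-(1 : ℝ) / 2) := by
  have hc₁0 := hc₁.1
  refine ⟨192 / Real.sqrt c₁, div_pos (by norm_num) (Real.sqrt_pos.mpr hc₁0), ?_⟩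
  intro t N₀ N₁ M P r q m ξ Vt φ ht hN₀ hN₁ hM hP hr hq hm hξ hVt hVtsupp hVt1 hφex hφ''
  obtain ⟨a', b', ha', hb', hφ⟩ := hφex
  -- basic constants
  set c2 : ℝ := (2:ℝ) ^ ((1:ℝ)/3) with hc2def
  have h1c2 : (1:ℝ) ≤ c2 := by
    have := Real.rpow_le_rpow (by norm_num : (0:ℝ) ≤ 1) (by norm_num : (1:ℝ) ≤ 2)
      (by norm_num : (0:ℝ) ≤ (1:ℝ)/3)
    rwa [Real.one_rpow] at this
  have hc2le2 : c2 ≤ 2 := by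
    have := Real.rpow_le_rpow_of_exponent_le (by norm_num : (1:ℝ) ≤ 2)
      (by norm_num : (1:ℝ)/3 ≤ 1)
    rwa [Real.rpow_one] at this
  have hc2cube : c2 ^ (3:ℕ) = 2 := by
    rw [hc2def, ← Real.rpow_natCast ((2:ℝ) ^ ((1:ℝ)/3)) 3, ← Real.rpow_mul (by norm_num : (0:ℝ) ≤ 2)]
    norm_num
  set X : ℝ := Real.sqrt (N₀ * M) / P with hXdef
  have hX0 : 0 ≤ X := div_nonneg (Real.sqrt_nonneg _) hP.le
  set maxv : ℝ := max t X with hmaxdef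
  have hmax1 : (1:ℝ) ≤ maxv := le_trans ht (le_max_left _ _)
  have hmax0 : (0:ℝ) < maxv := lt_of_lt_of_le one_pos hmax1
  have hq0 : 0 < q := lt_of_lt_of_le hP hq.1
  set A : ℝ := 2 / q * Real.sqrt (N₀ * m) with hAdef
  have hA0 : 0 ≤ A := mul_nonneg (div_nonneg (by norm_num) hq0.le) (Real.sqrt_nonneg _)
  have hAX : X ≤ A := by
    have h1 : Real.sqrt (N₀ * M) ≤ Real.sqrt (N₀ * m) :=
      Real.sqrt_le_sqrt (mul_le_mul_of_nonneg_left hm.1 hN₀.le)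
    rw [hXdef, hAdef, div_le_iff₀ hP]
    have h5 : (1:ℝ) ≤ 2 / q * P := by
      rw [div_mul_eq_mul_div, le_div_iff₀ hq0]
      linarith [hq.2]
    nlinarith [Real.sqrt_nonneg (N₀ * M), Real.sqrt_nonneg (N₀ * m),
      mul_le_mul_of_nonneg_right h5 (Real.sqrt_nonneg (N₀ * m))]
  set Bc : ℝ := 3 / q * (N₀ * N₁ * ξ / r) ^ ((1:ℝ)/3) with hBdef
  -- the outer open interval
  set U₀ : Set ℝ := Ioo (max a' 0) b' with hU₀def
  have hU₀open : IsOpen U₀ := isOpen_Ioo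
  have hmaxa : max a' 0 < 1 := max_lt ha' one_pos
  have hU₀Icc : Icc (1:ℝ) 2 ⊆ U₀ := fun y hy =>
    ⟨lt_of_lt_of_le hmaxa hy.1, lt_of_le_of_lt hy.2 hb'⟩
  -- phase
  set f : ℝ → ℝ := fun y => t * φ y + 2 / q * Real.sqrt (N₀ * m) * Real.sqrt y +
      3 / q * (N₀ * N₁ * ξ / r) ^ ((1:ℝ)/3) * y ^ ((1:ℝ)/3) with hfdef
  set Ef : ℝ → ℂ := fun y => e2pi (f y) with hEfdef
  have hφAt : ∀ y ∈ U₀, ContinuousAt φ y := by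
    intro y hy
    have hmem : y ∈ Ioo a' b' := ⟨lt_of_le_of_lt (le_max_left a' 0) hy.1, hy.2⟩
    exact (hφ.contDiffAt (isOpen_Ioo.mem_nhds hmem)).continuousAt
  have hfAt : ∀ y ∈ U₀, ContinuousAt f y := by
    intro y hy
    have hy0 : 0 < y := lt_of_le_of_lt (le_max_right a' 0) hy.1
    exact (((hφAt y hy).const_mul t).add
      ((Real.continuous_sqrt.continuousAt).const_mul _)).add
      ((Real.continuousAt_rpow_const y _ (Or.inl hy0.ne')).const_mul _)
  have hEfAt : ∀ y ∈ U₀, ContinuousAt Ef y := fun y hy =>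
    continuous_e2pi.continuousAt.comp (hfAt y hy)
  have hEfOn : ContinuousOn Ef U₀ := fun y hy => (hEfAt y hy).continuousWithinAt
  have h1U₀ : (1:ℝ) ∈ U₀ := hU₀Icc ⟨le_rfl, one_le_two⟩
  have hIcc12sub : Icc (1:ℝ) 2 ⊆ U₀ := hU₀Icc
  -- step 1: reduce to interval integral
  have hVtzero : ∀ y : ℝ, y ∉ Ioo (1:ℝ) 2 → Vt y = 0 := fun y hy =>
    Function.notMem_support.mp (fun hs => hy (hVtsupp hs))
  have hstep1 : (∫ y in Ioi (0:ℝ), (Vt y : ℂ) * Ef y)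
      = ∫ y in (1:ℝ)..2, (Vt y : ℂ) * Ef y := by
    rw [setIntegral_eq_of_subset_of_ae_diff_eq_zero measurableSet_Ioi.nullMeasurableSet
      (fun y (hy : y ∈ Ioo (1:ℝ) 2) => lt_trans one_pos hy.1 : Ioo (1:ℝ) 2 ⊆ Ioi 0)
      (ae_of_all _ (fun y hy => by rw [hVtzero y hy.2]; simp))]
    rw [intervalIntegral.integral_of_le one_le_two, integral_Ioc_eq_integral_Ioo]
  -- antiderivative G
  set G : ℝ → ℂ := fun y => ∫ s in (1:ℝ)..y, Ef s with hGdef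
  have hGd : ∀ y ∈ U₀, HasDerivAt G (Ef y) y := by
    intro y hy
    have hsub : uIcc (1:ℝ) y ⊆ U₀ := (ordConnected_Ioo).uIcc_subset h1U₀ hy
    exact intervalIntegral.integral_hasDerivAt_right
      ((hEfOn.mono hsub).intervalIntegrable)
      (ContinuousOn.stronglyMeasurableAtFilter hU₀open hEfOn y hy)
      (hEfAt y hy)
  have hGc : ContinuousOn G (Icc (1:ℝ) 2) := fun y hy =>
    (hGd y (hU₀Icc hy)).continuousAt.continuousWithinAt
  -- outer integration by parts
  have hVt2' : Vt 2 = 0 := hVtzero 2 (by norm_num)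
  have hVt1' : Vt 1 = 0 := hVtzero 1 (by norm_num)
  have hDVt : ∀ x : ℝ, HasDerivAt Vt (deriv Vt x) x := fun x =>
    ((hVt.differentiable (by simp)) x).hasDerivAt
  have hderivVtc : Continuous (deriv Vt) := hVt.continuous_deriv (by simp)
  have hEfint : IntervalIntegrable Ef volume 1 2 :=
    (hEfOn.mono (by rw [uIcc_of_le one_le_two]; exact hU₀Icc)).intervalIntegrable
  have hIBP : ∫ y in (1:ℝ)..2, (((deriv Vt y : ℝ) : ℂ) * G y + (Vt y : ℂ) * Ef y)
      = (Vt 2 : ℂ) * G 2 - (Vt 1 : ℂ) * G 1 := by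
    apply integral_deriv_mul_eq_sub_of_hasDerivAt
    · exact (Complex.continuous_ofReal.comp hVt.continuous).continuousOn
    · rw [uIcc_of_le one_le_two]; exact hGc
    · exact fun x _ => (hDVt x).ofReal_comp
    · intro x hx
      rw [min_eq_left one_le_two, max_eq_right one_le_two] at hx
      exact hGd x (hU₀Icc (Ioo_subset_Icc_self hx))
    · exact (Complex.continuous_ofReal.comp hderivVtc).intervalIntegrable _ _
    · exact hEfint
  have hint1 : IntervalIntegrable (fun y => ((deriv Vt y : ℝ) : ℂ) * G y) volume 1 2 := by
    apply ContinuousOn.intervalIntegrable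
    rw [uIcc_of_le one_le_two]
    exact (Complex.continuous_ofReal.comp hderivVtc).continuousOn.mul hGc
  have hint2 : IntervalIntegrable (fun y => (Vt y : ℂ) * Ef y) volume 1 2 :=
    ((Complex.continuous_ofReal.comp hVt.continuous).continuousOn.mul
      (hEfOn.mono (by rw [uIcc_of_le one_le_two]; exact hU₀Icc))).intervalIntegrable
  have hstep2 : (∫ y in (1:ℝ)..2, (Vt y : ℂ) * Ef y)
      = - ∫ y in (1:ℝ)..2, ((deriv Vt y : ℝ) : ℂ) * G y := by
    have := integral_add hint1 hint2
    rw [hIBP] at this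
    rw [hVt1', hVt2'] at this
    simp only [Complex.ofReal_zero, zero_mul, sub_zero] at this
    linear_combination -this
  -- inner open interval W
  set lw : ℝ := (max a' 0) ^ ((1:ℝ)/3) with hlwdef
  set ub : ℝ := b' ^ ((1:ℝ)/3) with hubdef
  have hlw0 : 0 ≤ lw := Real.rpow_nonneg (le_max_right a' 0) _
  have hlw1 : lw < 1 := Real.rpow_lt_one (le_max_right a' 0) hmaxa (by norm_num)
  have hubc2 : c2 < ub := Real.rpow_lt_rpow (by norm_num) hb' (by norm_num)
  set W : Set ℝ := Ioo lw ub with hWdef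
  have hWopen : IsOpen W := isOpen_Ioo
  have hWIcc : Icc (1:ℝ) c2 ⊆ W := fun u hu =>
    ⟨lt_of_lt_of_le hlw1 hu.1, lt_of_le_of_lt hu.2 hubc2⟩
  have hWpos : ∀ u ∈ W, (0:ℝ) < u := fun u hu => lt_of_le_of_lt hlw0 hu.1
  have hlwcube : lw ^ (3:ℕ) = max a' 0 := by
    rw [hlwdef, ← Real.rpow_natCast ((max a' 0) ^ ((1:ℝ)/3)) 3,
      ← Real.rpow_mul (le_max_right a' 0)]
    norm_num
  have hubcube : ub ^ (3:ℕ) = b' := by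
    rw [hubdef, ← Real.rpow_natCast (b' ^ ((1:ℝ)/3)) 3,
      ← Real.rpow_mul (by linarith : (0:ℝ) ≤ b')]
    norm_num
  have hWcube : ∀ u ∈ W, u ^ (3:ℕ) ∈ Ioo a' b' := by
    intro u hu
    constructor
    · calc a' ≤ max a' 0 := le_max_left _ _
        _ = lw ^ (3:ℕ) := hlwcube.symm
        _ < u ^ (3:ℕ) := pow_lt_pow_left₀ hu.1 hlw0 (by norm_num)
    · calc u ^ (3:ℕ) < ub ^ (3:ℕ) :=
          pow_lt_pow_left₀ hu.2 (le_of_lt (hWpos u hu)) (by norm_num)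
        _ = b' := hubcube
  -- ψ and its derivatives
  set ψ : ℝ → ℝ := fun v => φ (v ^ 3) with hψdef
  have hψW : ContDiffOn ℝ (⊤ : ℕ∞) ψ W :=
    ContDiffOn.comp hφ ((contDiff_id.pow 3).contDiffOn) (fun u hu => hWcube u hu)
  set ψ1 : ℝ → ℝ := deriv ψ with hψ1def
  set ψ2 : ℝ → ℝ := deriv ψ1 with hψ2def
  have hψ1W : ContDiffOn ℝ (⊤ : ℕ∞) ψ1 W := hψW.deriv_of_isOpen hWopen (by simp)
  have hψ2W : ContDiffOn ℝ (⊤ : ℕ∞) ψ2 W := hψ1W.deriv_of_isOpen hWopen (by simp)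
  have hψd : ∀ u ∈ W, HasDerivAt ψ (ψ1 u) u := fun u hu =>
    ((hψW.differentiableOn (by simp)).differentiableAt (hWopen.mem_nhds hu)).hasDerivAt
  have hψ1d : ∀ u ∈ W, HasDerivAt ψ1 (ψ2 u) u := fun u hu =>
    ((hψ1W.differentiableOn (by simp)).differentiableAt (hWopen.mem_nhds hu)).hasDerivAt
  have hψ2low : ∀ u ∈ Icc (1:ℝ) c2, c₁ ≤ ψ2 u := by
    intro u hu
    have h := hφ'' u hu
    rwa [iteratedDeriv_succ, iteratedDeriv_one] at h
  -- g and derivatives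
  set g : ℝ → ℝ := fun u => t * ψ u + A * u ^ ((3:ℝ)/2) + Bc * u with hgdef
  set g1 : ℝ → ℝ := fun u => t * ψ1 u + A * ((3:ℝ)/2 * u ^ ((1:ℝ)/2)) + Bc with hg1def
  set g2 : ℝ → ℝ := fun u => t * ψ2 u + A * ((3:ℝ)/2 * ((1:ℝ)/2 * u ^ (-(1:ℝ)/2))) with hg2def
  have hgd : ∀ u ∈ W, HasDerivAt g (g1 u) u := by
    intro u hu
    have hu0 : u ≠ 0 := (hWpos u hu).ne'
    have h1 := (hψd u hu).const_mul t
    have h2 := (Real.hasDerivAt_rpow_const (x := u) (p := (3:ℝ)/2) (Or.inl hu0)).const_mul A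
    have h3 := (hasDerivAt_id u).const_mul Bc
    have := (h1.add h2).add h3
    exact this.congr_deriv (by simp only [hg1def]; norm_num)
  have hg1d : ∀ u ∈ W, HasDerivAt g1 (g2 u) u := by
    intro u hu
    have hu0 : u ≠ 0 := (hWpos u hu).ne'
    have h1 := (hψ1d u hu).const_mul t
    have h2 := ((Real.hasDerivAt_rpow_const (x := u) (p := (1:ℝ)/2)
      (Or.inl hu0)).const_mul ((3:ℝ)/2)).const_mul A
    have h3 := hasDerivAt_const u Bc
    have := (h1.add h2).add h3
    exact this.congr_deriv (by simp only [hg2def]; norm_num)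
  have hg2cIcc : ContinuousOn g2 (Icc (1:ℝ) c2) := by
    apply ContinuousOn.add
    · exact (continuousOn_const.mul (hψ2W.continuousOn.mono hWIcc))
    · apply continuousOn_const.mul
      apply continuousOn_const.mul
      apply continuousOn_const.mul
      intro u hu
      exact (Real.continuousAt_rpow_const u _ (Or.inl (by linarith [hu.1] : u ≠ 0))).continuousWithinAt
  set lam : ℝ := c₁ / 4 * maxv with hlamdef
  have hlam : 0 < lam := mul_pos (by linarith) hmax0
  have hg2low : ∀ u ∈ Icc (1:ℝ) c2, lam ≤ g2 u := by
    intro u hu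
    have hu0 : (0:ℝ) ≤ u := by linarith [hu.1]
    have hrpow : (1:ℝ)/2 ≤ u ^ (-(1:ℝ)/2) := by
      rw [neg_div, Real.rpow_neg hu0]
      have h1 : u ^ ((1:ℝ)/2) ≤ (2:ℝ) ^ ((1:ℝ)/2) :=
        Real.rpow_le_rpow hu0 (hu.2.trans hc2le2) (by norm_num)
      have h2 : (2:ℝ) ^ ((1:ℝ)/2) ≤ 2 := by
        have := Real.rpow_le_rpow_of_exponent_le (by norm_num : (1:ℝ) ≤ 2)
          (by norm_num : (1:ℝ)/2 ≤ 1)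
        rwa [Real.rpow_one] at this
      have h3 : (0:ℝ) < u ^ ((1:ℝ)/2) := Real.rpow_pos_of_pos (by linarith [hu.1]) _
      have := inv_anti₀ h3 (h1.trans h2)
      calc (1:ℝ)/2 = 2⁻¹ := by norm_num
        _ ≤ (u ^ ((1:ℝ)/2))⁻¹ := this
    have hψ2u := hψ2low u hu
    have e1 : c₁ * t ≤ t * ψ2 u := by
      have h := mul_le_mul_of_nonneg_left hψ2u (by linarith : (0:ℝ) ≤ t)
      linarith [h]
    have e2 : (3:ℝ)/8 * A ≤ A * ((3:ℝ)/2 * ((1:ℝ)/2 * u ^ (-(1:ℝ)/2))) := by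
      have h := mul_le_mul_of_nonneg_left hrpow
        (mul_nonneg (by norm_num : (0:ℝ) ≤ (3:ℝ)/4) hA0)
      linarith [h]
    have e3 : maxv ≤ t + X := max_le_add_of_nonneg (by linarith) hX0
    have e4 : c₁ / 4 * maxv ≤ c₁ / 4 * (t + X) :=
      mul_le_mul_of_nonneg_left e3 (by linarith)
    have e5 : c₁ * X ≤ 1 * X := mul_le_mul_of_nonneg_right hc₁.2 hX0
    have e6 : (0:ℝ) ≤ c₁ * t := mul_nonneg hc₁0.le (by linarith)
    simp only [hg2def]
    rw [hlamdef]
    linarith [e1, e2, e4, e5, e6, hAX, hX0]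
  -- E_g and its antiderivative
  have hEgAt : ∀ u ∈ W, ContinuousAt (fun u => e2pi (g u)) u := fun u hu =>
    continuous_e2pi.continuousAt.comp (hgd u hu).continuousAt
  have hEgOn : ContinuousOn (fun u => e2pi (g u)) W := fun u hu =>
    (hEgAt u hu).continuousWithinAt
  have h1W : (1:ℝ) ∈ W := hWIcc ⟨le_rfl, h1c2⟩
  set G₂ : ℝ → ℂ := fun s => ∫ u in (1:ℝ)..s, e2pi (g u) with hG₂def
  have hG₂d : ∀ s ∈ W, HasDerivAt G₂ (e2pi (g s)) s := by
    intro s hs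
    have hsub : uIcc (1:ℝ) s ⊆ W := (ordConnected_Ioo).uIcc_subset h1W hs
    exact intervalIntegral.integral_hasDerivAt_right
      ((hEgOn.mono hsub).intervalIntegrable)
      (ContinuousOn.stronglyMeasurableAtFilter hWopen hEgOn s hs)
      (hEgAt s hs)
  have hG₂bound : ∀ s ∈ Icc (1:ℝ) c2, ‖G₂ s‖ ≤ 4 / Real.sqrt lam := by
    intro s hs
    have hsub : Icc (1:ℝ) s ⊆ Icc (1:ℝ) c2 := Icc_subset_Icc le_rfl hs.2
    exact vdc_second hs.1 hlam
      (fun u hu => hgd u (hWIcc (hsub hu)))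
      (fun u hu => hg1d u (hWIcc (hsub hu)))
      (hg2cIcc.mono hsub)
      (fun u hu => hg2low u (hsub hu))
  have hG₂c : ContinuousOn G₂ (Icc (1:ℝ) c2) := fun s hs =>
    (hG₂d s (hWIcc hs)).continuousAt.continuousWithinAt
  -- the G bound
  have hGbound : ∀ y ∈ Icc (1:ℝ) 2, ‖G y‖ ≤ 96 / Real.sqrt lam := by
    intro y hy
    have hy0 : (0:ℝ) ≤ y := by linarith [hy.1]
    set c : ℝ := y ^ ((1:ℝ)/3) with hcdef
    have hc1 : (1:ℝ) ≤ c := by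
      have := Real.rpow_le_rpow (by norm_num : (0:ℝ) ≤ 1) hy.1
        (by norm_num : (0:ℝ) ≤ (1:ℝ)/3)
      rwa [Real.one_rpow] at this
    have hcc2 : c ≤ c2 := Real.rpow_le_rpow hy0 hy.2 (by norm_num)
    have hccube : c ^ (3:ℕ) = y := by
      rw [hcdef, ← Real.rpow_natCast (y ^ ((1:ℝ)/3)) 3, ← Real.rpow_mul hy0]
      norm_num
    have hcIcc : Icc (1:ℝ) c ⊆ Icc (1:ℝ) c2 := Icc_subset_Icc le_rfl hcc2
    have hfg : ∀ u ∈ Icc (1:ℝ) c2, f (u ^ (3:ℕ)) = g u := by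
      intro u hu
      have hu0 : (0:ℝ) ≤ u := by linarith [hu.1]
      have hsqrt : Real.sqrt (u ^ (3:ℕ)) = u ^ ((3:ℝ)/2) := by
        rw [Real.sqrt_eq_rpow, ← Real.rpow_natCast u 3, ← Real.rpow_mul hu0]
        norm_num
      have hcbrt : (u ^ (3:ℕ)) ^ ((1:ℝ)/3) = u := by
        rw [← Real.rpow_natCast u 3, ← Real.rpow_mul hu0]
        norm_num
      simp only [hfdef, hgdef, hψdef, hsqrt, hcbrt, hAdef, hBdef]
    have himg : (fun u : ℝ => u ^ (3:ℕ)) '' (uIcc (1:ℝ) c) ⊆ U₀ := by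
      rw [uIcc_of_le hc1]
      rintro z ⟨u, hu, rfl⟩
      apply hU₀Icc
      constructor
      · exact one_le_pow₀ hu.1
      · calc u ^ (3:ℕ) ≤ c ^ (3:ℕ) := pow_le_pow_left₀ (by linarith [hu.1]) hu.2 3
          _ = y := hccube
          _ ≤ 2 := hy.2
    have hsubst : G y = ∫ u in (1:ℝ)..c, ((3:ℝ) * u ^ 2) • Ef (u ^ (3:ℕ)) := by
      have h := intervalIntegral.integral_comp_smul_deriv' (a := (1:ℝ)) (b := c)
        (f := fun u : ℝ => u ^ (3:ℕ)) (f' := fun u : ℝ => (3:ℝ) * u ^ 2) (g := Ef)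
        (fun x _ => by simpa using hasDerivAt_pow 3 x)
        (by fun_prop)
        (hEfOn.mono himg)
      simp only [one_pow, hccube] at h
      rw [show G y = ∫ s in (1:ℝ)..y, Ef s from rfl, ← h]
      simp only [Function.comp_def]
    have hsubst2 : G y = ∫ u in (1:ℝ)..c, ((3 * u ^ 2 : ℝ) : ℂ) * e2pi (g u) := by
      rw [hsubst]
      apply intervalIntegral.integral_congr
      intro u hu
      rw [uIcc_of_le hc1] at hu
      have huIn : u ∈ Icc (1:ℝ) c2 := hcIcc hu
      show ((3:ℝ) * u ^ 2) • Ef (u ^ (3:ℕ)) = _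
      rw [show Ef (u ^ (3:ℕ)) = e2pi (f (u ^ (3:ℕ))) from rfl, hfg u huIn,
        Complex.real_smul]
    have hsubW : uIcc (1:ℝ) c ⊆ W := by
      rw [uIcc_of_le hc1]
      exact fun u hu => hWIcc (hcIcc hu)
    have hEgint : IntervalIntegrable (fun u => e2pi (g u)) volume 1 c :=
      (hEgOn.mono hsubW).intervalIntegrable
    have hIBP2 : ∫ u in (1:ℝ)..c,
        (((6 * u : ℝ) : ℂ) * G₂ u + ((3 * u ^ 2 : ℝ) : ℂ) * e2pi (g u))
        = ((3 * c ^ 2 : ℝ) : ℂ) * G₂ c - ((3 * (1:ℝ) ^ 2 : ℝ) : ℂ) * G₂ 1 := by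
      apply integral_deriv_mul_eq_sub_of_hasDerivAt
        (u := fun x : ℝ => ((3 * x ^ 2 : ℝ) : ℂ)) (v := G₂)
      · exact (Complex.continuous_ofReal.comp (by fun_prop)).continuousOn
      · rw [uIcc_of_le hc1]; exact hG₂c.mono hcIcc
      · intro x _
        have hd : HasDerivAt (fun x : ℝ => 3 * x ^ 2) (6 * x) x := by
          have := (hasDerivAt_pow 2 x).const_mul (3:ℝ)
          exact this.congr_deriv (by push_cast; ring)
        exact hd.ofReal_comp
      · intro x hx
        rw [min_eq_left hc1, max_eq_right hc1] at hx
        exact hG₂d x (hWIcc (hcIcc (Ioo_subset_Icc_self hx)))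
      · exact (Complex.continuous_ofReal.comp (by fun_prop)).intervalIntegrable _ _
      · exact hEgint
    have hintA : IntervalIntegrable (fun u => ((6 * u : ℝ) : ℂ) * G₂ u) volume 1 c := by
      apply ContinuousOn.intervalIntegrable
      rw [uIcc_of_le hc1]
      exact ((Complex.continuous_ofReal.comp (by fun_prop)).continuousOn).mul
        (hG₂c.mono hcIcc)
    have hintB : IntervalIntegrable
        (fun u => ((3 * u ^ 2 : ℝ) : ℂ) * e2pi (g u)) volume 1 c := by
      apply ContinuousOn.intervalIntegrable
      rw [uIcc_of_le hc1]
      exact ((Complex.continuous_ofReal.comp (by fun_prop)).continuousOn).mul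
        (hEgOn.mono (fun u hu => hWIcc (hcIcc hu)))
    have hG₂1 : G₂ 1 = 0 := intervalIntegral.integral_same
    have hadd := (intervalIntegral.integral_add hintA hintB).symm.trans hIBP2
    rw [hG₂1, mul_zero, sub_zero] at hadd
    have hsplit2 : (∫ u in (1:ℝ)..c, ((3 * u ^ 2 : ℝ) : ℂ) * e2pi (g u))
        = ((3 * c ^ 2 : ℝ) : ℂ) * G₂ c - ∫ u in (1:ℝ)..c, ((6 * u : ℝ) : ℂ) * G₂ u := by
      linear_combination hadd
    have hKb := hG₂bound c ⟨hc1, hcc2⟩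
    have hK0' : (0:ℝ) ≤ 4 / Real.sqrt lam := by positivity
    have hb1 : ‖((3 * c ^ 2 : ℝ) : ℂ) * G₂ c‖ ≤ 12 * (4 / Real.sqrt lam) := by
      rw [norm_mul, Complex.norm_real, Real.norm_eq_abs,
        abs_of_nonneg (by positivity : (0:ℝ) ≤ 3 * c ^ 2)]
      have h1 : 3 * c ^ 2 ≤ 12 := by nlinarith [hcc2, hc2le2, hc1]
      exact mul_le_mul h1 hKb (norm_nonneg _) (by norm_num)
    have hb2 : ‖∫ u in (1:ℝ)..c, ((6 * u : ℝ) : ℂ) * G₂ u‖ ≤ 12 * (4 / Real.sqrt lam) := by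
      have h := intervalIntegral.norm_integral_le_of_norm_le_const
        (C := 12 * (4 / Real.sqrt lam)) (a := (1:ℝ)) (b := c)
        (f := fun u => ((6 * u : ℝ) : ℂ) * G₂ u) ?_
      · refine h.trans ?_
        have : |c - 1| ≤ 1 := by
          rw [abs_of_nonneg (by linarith)]
          linarith [hcc2, hc2le2]
        nlinarith [this, hK0']
      · intro x hx
        rw [uIoc_of_le hc1] at hx
        have hxIn : x ∈ Icc (1:ℝ) c2 := ⟨hx.1.le, hx.2.trans hcc2⟩
        rw [norm_mul, Complex.norm_real, Real.norm_eq_abs,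
          abs_of_nonneg (by linarith [hxIn.1] : (0:ℝ) ≤ 6 * x)]
        have h1 : 6 * x ≤ 12 := by linarith [hxIn.2, hc2le2]
        exact mul_le_mul h1 (hG₂bound x hxIn) (norm_nonneg _) (by norm_num)
    rw [hsubst2, hsplit2]
    calc ‖((3 * c ^ 2 : ℝ) : ℂ) * G₂ c - ∫ u in (1:ℝ)..c, ((6 * u : ℝ) : ℂ) * G₂ u‖
        ≤ ‖((3 * c ^ 2 : ℝ) : ℂ) * G₂ c‖ + ‖∫ u in (1:ℝ)..c, ((6 * u : ℝ) : ℂ) * G₂ u‖ :=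
          norm_sub_le _ _
      _ ≤ 12 * (4 / Real.sqrt lam) + 12 * (4 / Real.sqrt lam) := add_le_add hb1 hb2
      _ = 96 / Real.sqrt lam := by ring
  -- final assembly
  have hK0 : (0:ℝ) ≤ 96 / Real.sqrt lam := by positivity
  have hVtcs : HasCompactSupport Vt := HasCompactSupport.intro isCompact_Icc
    (fun x hx => hVtzero x (fun hmem => hx (Ioo_subset_Icc_self hmem)))
  have hVt'int : Integrable (fun y => |deriv Vt y|) := by
    have hcs : HasCompactSupport (fun y => |deriv Vt y|) :=
      hVtcs.deriv.comp_left (g := abs) abs_zero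
    exact (hderivVtc.abs).integrable_of_hasCompactSupport hcs
  have hVt'12 : ∫ y in (1:ℝ)..2, |deriv Vt y| ≤ 1 := by
    rw [intervalIntegral.integral_of_le one_le_two]
    exact le_trans (setIntegral_le_integral hVt'int
      (ae_of_all _ fun x => abs_nonneg _)) hVt1
  have hfinalnorm : ‖∫ y in (1:ℝ)..2, (Vt y : ℂ) * Ef y‖ ≤ 96 / Real.sqrt lam := by
    rw [hstep2, norm_neg]
    have hGcc : ContinuousOn (fun y => ((deriv Vt y : ℝ) : ℂ) * G y) (Icc (1:ℝ) 2) :=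
      ((Complex.continuous_ofReal.comp hderivVtc).continuousOn).mul hGc
    calc ‖∫ y in (1:ℝ)..2, ((deriv Vt y : ℝ) : ℂ) * G y‖
        ≤ ∫ y in (1:ℝ)..2, ‖((deriv Vt y : ℝ) : ℂ) * G y‖ :=
          intervalIntegral.norm_integral_le_integral_norm one_le_two
      _ ≤ ∫ y in (1:ℝ)..2, |deriv Vt y| * (96 / Real.sqrt lam) := by
          apply intervalIntegral.integral_mono_on one_le_two
          · apply ContinuousOn.intervalIntegrable
            rw [uIcc_of_le one_le_two]
            exact hGcc.norm
          · exact (Continuous.intervalIntegrable (by fun_prop) _ _)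
          · intro x hx
            rw [norm_mul, Complex.norm_real, Real.norm_eq_abs]
            exact mul_le_mul_of_nonneg_left (hGbound x hx) (abs_nonneg _)
      _ = (∫ y in (1:ℝ)..2, |deriv Vt y|) * (96 / Real.sqrt lam) :=
          intervalIntegral.integral_mul_const _ _
      _ ≤ 1 * (96 / Real.sqrt lam) := mul_le_mul_of_nonneg_right hVt'12 hK0
      _ = 96 / Real.sqrt lam := one_mul _
  have hrhs : 96 / Real.sqrt lam = 192 / Real.sqrt c₁ * maxv ^ (-(1:ℝ)/2) := by
    have h4 : Real.sqrt (4:ℝ) = 2 := by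
      rw [show (4:ℝ) = 2 ^ 2 by norm_num, Real.sqrt_sq (by norm_num : (0:ℝ) ≤ 2)]
    have hsl : Real.sqrt lam = Real.sqrt c₁ / 2 * Real.sqrt maxv := by
      rw [hlamdef, Real.sqrt_mul (by positivity : (0:ℝ) ≤ c₁/4),
        Real.sqrt_div hc₁0.le, h4]
    have hmrw : maxv ^ (-(1:ℝ)/2) = (Real.sqrt maxv)⁻¹ := by
      rw [neg_div, Real.rpow_neg hmax0.le, ← Real.sqrt_eq_rpow]
    have hsc : (0:ℝ) < Real.sqrt c₁ := Real.sqrt_pos.mpr hc₁0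
    have hsm : (0:ℝ) < Real.sqrt maxv := Real.sqrt_pos.mpr hmax0
    rw [hsl, hmrw]
    field_simp
    ring
  show ‖∫ y in Ioi (0:ℝ), (Vt y : ℂ) * Ef y‖ ≤ 192 / Real.sqrt c₁ * maxv ^ (-(1:ℝ)/2)
  rw [hstep1, ← hrhs]
  exact hfinalnorm
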